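/- Let E be a set of five lines in PG(3,2) such that any two of them have a common point. Then E contains a pencil, i.e., three lines that are coplanar and pass through a common point. -/

import Mathlib

/-!
Pairwise meeting lines are either all concurrent or all coplanar. In the concurrent case the
ten pairs of lines span planes through the common point, of which `PG(3,2)` has only seven; in
the coplanar case the ten pairs meet in points of the common plane, again only seven. So two
different pairs give the same plane (resp. point), and the at least three lines occurring in
them form a pencil.
-/

open Module

namespace Finset

variable {α : Type*}

theorem two_lt_card_union_of_ne {u w : Finset α} [DecidableEq α] (hu : u.card = 2)
    (hw : w.card = 2) (huw : u ≠ w) : 2 < (u ∪ w).card := by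
  by_contra! h
  have hu' := eq_of_subset_of_card_le subset_union_left (h.trans hu.ge)
  have hw' := eq_of_subset_of_card_le subset_union_right (h.trans hw.ge)
  exact huw (hu'.trans hw'.symm)

theorem exists_three_le_of_ncard_lt [SemilatticeSup α] [OrderBot α] {s : Finset α} {T : Set α}
    (hT : T.Finite) (hcard : T.ncard < s.card.choose 2)
    (hmaps : ∀ a ∈ s, ∀ b ∈ s, a ≠ b → a ⊔ b ∈ T) :
    ∃ x ∈ T, ∃ a ∈ s, ∃ b ∈ s, ∃ c ∈ s, a ≠ b ∧ a ≠ c ∧ b ≠ c ∧ a ≤ x ∧ b ≤ x ∧ c ≤ x := by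
  classical
  have hmaps' : ∀ u ∈ s.powersetCard 2, u.sup id ∈ T := by
    intro u hu
    obtain ⟨hus, hu2⟩ := mem_powersetCard.1 hu
    obtain ⟨a, b, hab, rfl⟩ := card_eq_two.1 hu2
    simpa using hmaps a (hus (by simp)) b (hus (by simp)) hab
  obtain ⟨u, hu, w, hw, huw, hsup⟩ := exists_ne_map_eq_of_card_lt_of_maps_to
    (t := hT.toFinset) (by rwa [card_powersetCard, ← Set.ncard_eq_toFinset_card T hT])
    (fun u hu => hT.mem_toFinset.2 (hmaps' u hu))
  have hle : ∀ x ∈ u ∪ w, x ≤ u.sup id := fun x hx => by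
    simpa [sup_union, hsup] using le_sup (f := id) hx
  obtain ⟨a, ha, b, hb, c, hc, hab, hac, hbc⟩ := two_lt_card.1 <|
    two_lt_card_union_of_ne (mem_powersetCard.1 hu).2 (mem_powersetCard.1 hw).2 huw
  have hsub : u ∪ w ⊆ s := union_subset (mem_powersetCard.1 hu).1 (mem_powersetCard.1 hw).1
  exact ⟨u.sup id, hmaps' u hu, a, hsub ha, b, hsub hb, c, hsub hc, hab, hac, hbc,
    hle a ha, hle b hb, hle c hc⟩

theorem exists_three_ge_of_ncard_lt [SemilatticeInf α] [OrderTop α] {s : Finset α} {T : Set α}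
    (hT : T.Finite) (hcard : T.ncard < s.card.choose 2)
    (hmaps : ∀ a ∈ s, ∀ b ∈ s, a ≠ b → a ⊓ b ∈ T) :
    ∃ x ∈ T, ∃ a ∈ s, ∃ b ∈ s, ∃ c ∈ s, a ≠ b ∧ a ≠ c ∧ b ≠ c ∧ x ≤ a ∧ x ≤ b ∧ x ≤ c :=
  exists_three_le_of_ncard_lt (α := αᵒᵈ) hT hcard hmaps

end Finset

namespace Submodule

section DivisionRing

variable {K V : Type*} [DivisionRing K] [AddCommGroup V] [Module K V]

theorem ncard_finrank_eq_one_le [Finite V] (U : Submodule K V) :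
    {q : Submodule K V | finrank K q = 1 ∧ q ≤ U}.ncard ≤ Nat.card U - 1 := by
  have hsub : {q : Submodule K V | finrank K q = 1 ∧ q ≤ U} ⊆
      (fun v => K ∙ v) '' ((U : Set V) \ {0}) := by
    rintro q ⟨hq, hqU⟩
    obtain ⟨v, hv, hv0⟩ := exists_mem_ne_zero_of_ne_bot (one_le_finrank_iff.1 hq.ge)
    exact ⟨v, ⟨hqU hv, hv0⟩, (eq_span_singleton_of_mem_of_finrank_eq_one hq hv hv0).symm⟩
  calc _ ≤ _ := Set.ncard_le_ncard hsub
    _ ≤ ((U : Set V) \ {0}).ncard := Set.ncard_image_le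
    _ = Nat.card U - 1 := by
      rw [Set.ncard_sdiff_singleton_of_mem U.zero_mem, ← Nat.card_coe_set_eq]
      rfl

variable [FiniteDimensional K V]

theorem finrank_inf_eq_one_of_finrank_eq_two {a b : Submodule K V} (ha : finrank K a = 2)
    (hb : finrank K b = 2) (hab : a ≠ b) (hmeet : a ⊓ b ≠ ⊥) : finrank K ↥(a ⊓ b) = 1 := by
  have hpos : 1 ≤ finrank K ↥(a ⊓ b) := one_le_finrank_iff.2 hmeet
  have hlt : a ⊓ b < a := inf_le_left.lt_of_ne fun h =>
    hab (eq_of_le_of_finrank_eq (inf_eq_left.1 h) (ha.trans hb.symm))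
  have := finrank_lt_finrank_of_lt hlt
  omega

theorem finrank_sup_eq_three_of_finrank_eq_two {a b : Submodule K V} (ha : finrank K a = 2)
    (hb : finrank K b = 2) (hab : a ≠ b) (hmeet : a ⊓ b ≠ ⊥) : finrank K ↥(a ⊔ b) = 3 := by
  have := finrank_sup_add_finrank_inf_eq a b
  have := finrank_inf_eq_one_of_finrank_eq_two ha hb hab hmeet
  omega

theorem eq_sup_of_finrank_eq_one {l x y : Submodule K V} (hl : finrank K l = 2)
    (hx : finrank K x = 1) (hy : finrank K y = 1) (hxy : x ≠ y) (hxl : x ≤ l) (hyl : y ≤ l) :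
    l = x ⊔ y := by
  have hlt : x < x ⊔ y := le_sup_left.lt_of_ne fun h =>
    hxy (eq_of_le_of_finrank_eq (sup_eq_left.1 h.symm) (hy.trans hx.symm)).symm
  have := finrank_lt_finrank_of_lt hlt
  exact (eq_of_le_of_finrank_le (sup_le hxl hyl) (by omega)).symm

theorem forall_inf_le_or_forall_le_sup {E : Set (Submodule K V)}
    (hdim : ∀ l ∈ E, finrank K l = 2) (hmeet : E.Pairwise fun l₁ l₂ => l₁ ⊓ l₂ ≠ ⊥)
    {a b : Submodule K V} (ha : a ∈ E) (hb : b ∈ E) (hab : a ≠ b) :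
    (∀ l ∈ E, a ⊓ b ≤ l) ∨ ∀ l ∈ E, l ≤ a ⊔ b := by
  have hpoint {l m} (hl : l ∈ E) (hm : m ∈ E) (hlm : l ≠ m) : finrank K ↥(l ⊓ m) = 1 :=
    finrank_inf_eq_one_of_finrank_eq_two (hdim l hl) (hdim m hm) hlm (hmeet hl hm hlm)
  refine or_iff_not_imp_left.2 fun h => ?_
  push Not at h
  obtain ⟨c, hc, hc_not⟩ := h
  -- A line missing `a ⊓ b` meets `a` and `b` in two distinct points of `a ⊔ b`.
  have le_sup_of_not_inf_le : ∀ l ∈ E, ¬ a ⊓ b ≤ l → l ≤ a ⊔ b := by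
    intro l hl hl_not
    have hla : l ≠ a := fun h => hl_not (h ▸ inf_le_left)
    have hlb : l ≠ b := fun h => hl_not (h ▸ inf_le_right)
    have hne : l ⊓ a ≠ l ⊓ b := fun h => hl_not <| by
      have : l ⊓ a = a ⊓ b := eq_of_le_of_finrank_eq (le_inf inf_le_right (h ▸ inf_le_right))
        ((hpoint hl ha hla).trans (hpoint ha hb hab).symm)
      exact this ▸ inf_le_left
    rw [eq_sup_of_finrank_eq_one (hdim l hl) (hpoint hl ha hla) (hpoint hl hb hlb) hne
      inf_le_left inf_le_left]
    exact sup_le_sup inf_le_right inf_le_right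
  intro l hl
  by_cases hl_le : a ⊓ b ≤ l
  · -- `l` is spanned by `a ⊓ b` and its meet with `c`, both in `a ⊔ b`.
    have hlc : l ≠ c := fun h => hc_not (h ▸ hl_le)
    have hne : a ⊓ b ≠ l ⊓ c := fun h => hc_not (h ▸ inf_le_right)
    rw [eq_sup_of_finrank_eq_one (hdim l hl) (hpoint ha hb hab) (hpoint hl hc hlc) hne hl_le
      inf_le_left]
    exact sup_le (inf_le_left.trans le_sup_left)
      (inf_le_right.trans (le_sup_of_not_inf_le c hc hc_not))
  · exact le_sup_of_not_inf_le l hl hl_le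

end DivisionRing

section Field

variable {K V : Type*} [Field K] [AddCommGroup V] [Module K V]

-- `dualAnnihilator` is the bijection.
theorem ncard_hyperplanes_ge_eq [FiniteDimensional K V] (p : Submodule K V) :
    {W : Submodule K V | finrank K W + 1 = finrank K V ∧ p ≤ W}.ncard =
      {q : Submodule K (Dual K V) | finrank K q = 1 ∧ q ≤ p.dualAnnihilator}.ncard := by
  have hinj : Function.Injective (dualAnnihilator (R := K) (M := V)) := fun _ _ =>
    Subspace.dualAnnihilator_inj.1
  rw [← Set.ncard_image_of_injective _ hinj]
  congr 1
  ext q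
  constructor
  · rintro ⟨W, ⟨hW, hpW⟩, rfl⟩
    have := Subspace.finrank_add_finrank_dualAnnihilator_eq W
    exact ⟨by omega, Subspace.dualAnnihilator_le_dualAnnihilator_iff.2 hpW⟩
  · rintro ⟨hq, hqp⟩
    have hq' := Subspace.dualCoannihilator_dualAnnihilator_eq (W := q)
    refine ⟨q.dualCoannihilator, ⟨?_, ?_⟩, hq'⟩
    · have := Subspace.finrank_add_finrank_dualAnnihilator_eq q.dualCoannihilator
      rwa [hq', hq] at this
    · rwa [← Subspace.dualAnnihilator_le_dualAnnihilator_iff, hq']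

end Field

section ZMod2

variable {V : Type*} [AddCommGroup V] [Module (ZMod 2) V]

theorem ncard_finrank_eq_one_le_seven [Finite V] {U : Submodule (ZMod 2) V}
    (hU : finrank (ZMod 2) U = 3) :
    {q : Submodule (ZMod 2) V | finrank (ZMod 2) q = 1 ∧ q ≤ U}.ncard ≤ 7 := by
  have hcard : Nat.card U = 8 := by
    rw [natCard_eq_pow_finrank (K := ZMod 2), hU, Nat.card_zmod]
    norm_num
  simpa [hcard] using ncard_finrank_eq_one_le U

theorem ncard_hyperplanes_ge_le_seven [Finite V] (hV : finrank (ZMod 2) V = 4)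
    {p : Submodule (ZMod 2) V} (hp : finrank (ZMod 2) p = 1) :
    {P : Submodule (ZMod 2) V | finrank (ZMod 2) P = 3 ∧ p ≤ P}.ncard ≤ 7 := by
  have hann : finrank (ZMod 2) p.dualAnnihilator = 3 := by
    have := Subspace.finrank_add_finrank_dualAnnihilator_eq p
    omega
  have := Module.finite_of_finite (ZMod 2) (M := Dual (ZMod 2) V)
  have hset : {P : Submodule (ZMod 2) V | finrank (ZMod 2) P = 3 ∧ p ≤ P} =
      {W : Submodule (ZMod 2) V | finrank (ZMod 2) W + 1 = finrank (ZMod 2) V ∧ p ≤ W} := by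
    simp only [hV, Nat.reduceEqDiff]
  rw [hset, ncard_hyperplanes_ge_eq]
  exact ncard_finrank_eq_one_le_seven hann

end ZMod2

end Submodule

/-- Any set of five pairwise intersecting lines of `PG(3,2)` contains a pencil:
three distinct lines lying in a common plane and passing through a common point. -/
theorem five_lines_contain_pencil
    (E : Set (Submodule (ZMod 2) (Fin 4 → ZMod 2)))
    (hcard : E.ncard = 5)
    (hdim : ∀ l ∈ E, Module.finrank (ZMod 2) l = 2)
    (hmeet : ∀ l₁ ∈ E, ∀ l₂ ∈ E, l₁ ≠ l₂ → l₁ ⊓ l₂ ≠ ⊥) :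
    ∃ l₁ ∈ E, ∃ l₂ ∈ E, ∃ l₃ ∈ E, l₁ ≠ l₂ ∧ l₁ ≠ l₃ ∧ l₂ ≠ l₃ ∧
      (∃ Pl : Submodule (ZMod 2) (Fin 4 → ZMod 2), Module.finrank (ZMod 2) Pl = 3 ∧
        l₁ ≤ Pl ∧ l₂ ≤ Pl ∧ l₃ ≤ Pl) ∧
      (∃ p : Submodule (ZMod 2) (Fin 4 → ZMod 2), Module.finrank (ZMod 2) p = 1 ∧
        p ≤ l₁ ∧ p ≤ l₂ ∧ p ≤ l₃) := by
  lift E to Finset (Submodule (ZMod 2) (Fin 4 → ZMod 2)) using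
    Set.finite_of_ncard_ne_zero (by omega)
  rw [Set.ncard_coe_finset] at hcard
  have hpoint {l m} (hl : l ∈ E) (hm : m ∈ E) (hlm : l ≠ m) :=
    Submodule.finrank_inf_eq_one_of_finrank_eq_two (hdim l hl) (hdim m hm) hlm
      (hmeet l hl m hm hlm)
  have hplane {l m} (hl : l ∈ E) (hm : m ∈ E) (hlm : l ≠ m) :=
    Submodule.finrank_sup_eq_three_of_finrank_eq_two (hdim l hl) (hdim m hm) hlm
      (hmeet l hl m hm hlm)
  obtain ⟨a, ha, b, hb, hab⟩ := Finset.one_lt_card.1 (by omega : 1 < E.card)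
  rcases Submodule.forall_inf_le_or_forall_le_sup hdim hmeet ha hb hab with hconc | hcopl
  · obtain ⟨P, ⟨hP, -⟩, l₁, h₁, l₂, h₂, l₃, h₃, h₁₂, h₁₃, h₂₃, hl₁, hl₂, hl₃⟩ :=
      E.exists_three_le_of_ncard_lt (T := {P | finrank (ZMod 2) P = 3 ∧ a ⊓ b ≤ P})
        (Set.toFinite _) (by
          rw [hcard]
          exact (Submodule.ncard_hyperplanes_ge_le_seven (finrank_fin_fun _)
            (hpoint ha hb hab)).trans_lt (by decide))
        fun l hl m hm hlm => ⟨hplane hl hm hlm, (hconc l hl).trans le_sup_left⟩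
    exact ⟨l₁, h₁, l₂, h₂, l₃, h₃, h₁₂, h₁₃, h₂₃, ⟨P, hP, hl₁, hl₂, hl₃⟩,
      ⟨a ⊓ b, hpoint ha hb hab, hconc l₁ h₁, hconc l₂ h₂, hconc l₃ h₃⟩⟩
  · obtain ⟨p, ⟨hp, -⟩, l₁, h₁, l₂, h₂, l₃, h₃, h₁₂, h₁₃, h₂₃, hl₁, hl₂, hl₃⟩ :=
      E.exists_three_ge_of_ncard_lt (T := {p | finrank (ZMod 2) p = 1 ∧ p ≤ a ⊔ b})
        (Set.toFinite _) (by
          rw [hcard]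
          exact (Submodule.ncard_finrank_eq_one_le_seven (hplane ha hb hab)).trans_lt
            (by decide))
        fun l hl m hm hlm => ⟨hpoint hl hm hlm, inf_le_left.trans (hcopl l hl)⟩
    exact ⟨l₁, h₁, l₂, h₂, l₃, h₃, h₁₂, h₁₃, h₂₃,
      ⟨a ⊔ b, hplane ha hb hab, hcopl l₁ h₁, hcopl l₂ h₂, hcopl l₃ h₃⟩, ⟨p, hp, hl₁, hl₂, hl₃⟩⟩
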